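/- arXiv:2411.11747 — 3 statements merged into one kernel-verified Lean document; each statement's English description precedes it below -/
import Mathlib

section
/- Let f:ℝ^d→ℝ be L-smooth and Σ∈ℝ^{d×d} be symmetric and invertible. Then for every x∈ℝ^d, |f_Σ(x) − f(x)| ≤ (L·d/4)·‖Σ‖². -/
/-! Expand `f (x + Σu) = f x + ⟪∇f x, Σu⟫ + R u` with `|R u| ≤ (L/2)‖Σu‖² ≤ (L/2)‖Σ‖²‖u‖²`.
The linear term is odd in `u`, so it integrates to zero against the Gaussian weight, and what
remains is bounded by `(L/2)‖Σ‖²` times the normalized second moment `π^{-d/2} ∫ ‖u‖² e^{-‖u‖²}`.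
In polar coordinates that moment is `Γ(d/2 + 1) / Γ(d/2) = d/2`. -/

open MeasureTheory Filter Matrix

noncomputable section

abbrev Vec (d : ℕ) := EuclideanSpace ℝ (Fin d)

/-- Action of a `d × d` matrix on a vector in `ℝ^d`. -/
def mApp {d : ℕ} (S : Matrix (Fin d) (Fin d) ℝ) (u : Vec d) : Vec d :=
  Matrix.toEuclideanLin S u

/-- Anisotropic Gaussian smoothing of `f` by the matrix `S`:
`f_S(x) = π^{-d/2} ∫ f(x + S u) e^{-‖u‖²} du`. -/
def gsmooth {d : ℕ} (f : Vec d → ℝ) (S : Matrix (Fin d) (Fin d) ℝ) (x : Vec d) : ℝ :=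
  (Real.pi ^ ((d : ℝ) / 2))⁻¹ * ∫ u : Vec d, f (x + mApp S u) * Real.exp (-‖u‖ ^ 2)

/-- Operator (spectral) norm of a matrix, acting on Euclidean space. -/
def opNorm {d : ℕ} (S : Matrix (Fin d) (Fin d) ℝ) : ℝ :=
  ‖LinearMap.toContinuousLinearMap (Matrix.toEuclideanLin S)‖

open Real Set Module
open scoped RealInnerProductSpace

theorem integral_Ioi_rpow_add_two_mul_exp_neg_sq {q : ℝ} (hq : -1 < q) :
    ∫ y in Ioi (0 : ℝ), y ^ (q + 2) * exp (-y ^ 2) =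
      (q + 1) / 2 * ∫ y in Ioi (0 : ℝ), y ^ q * exp (-y ^ 2) := by
  have h (r : ℝ) (hr : -1 < r) := integral_rpow_mul_exp_neg_rpow two_pos hr
  simp only [rpow_two] at h
  rw [h _ (by linarith), h _ hq, show (q + 2 + 1) / 2 = (q + 1) / 2 + 1 by ring,
    Gamma_add_one (by linarith)]
  ring

section GaussianMoments

variable {E : Type*} [NormedAddCommGroup E] [NormedSpace ℝ E] [FiniteDimensional ℝ E]
  [MeasurableSpace E] [BorelSpace E] (μ : Measure E) [μ.IsAddHaarMeasure]

theorem integrable_norm_pow_mul_exp_neg_norm_sq (k : ℕ) :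
    Integrable (fun x : E => ‖x‖ ^ k * exp (-‖x‖ ^ 2)) μ := by
  rcases subsingleton_or_nontrivial E with hE | hE
  · refine (integrable_const (‖(0 : E)‖ ^ k * exp (-‖(0 : E)‖ ^ 2))).congr
      (ae_of_all _ fun x => ?_)
    rw [Subsingleton.elim x 0]
  · rw [integrable_fun_norm_addHaar μ (f := fun t => t ^ k * exp (-t ^ 2))]
    refine (integrableOn_rpow_mul_exp_neg_mul_sq one_pos
      (neg_one_lt_zero.trans_le (Nat.cast_nonneg (finrank ℝ E - 1 + k)))).congr_fun
      (fun y _ => ?_) measurableSet_Ioi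
    simp only [rpow_natCast, pow_add, smul_eq_mul]
    ring_nf

theorem integral_norm_sq_mul_exp_neg_norm_sq :
    ∫ x, ‖x‖ ^ 2 * exp (-‖x‖ ^ 2) ∂μ = finrank ℝ E / 2 * ∫ x, exp (-‖x‖ ^ 2) ∂μ := by
  rcases subsingleton_or_nontrivial E with hE | hE
  · simp [finrank_zero_of_subsingleton, Subsingleton.elim _ (0 : E)]
  obtain ⟨n, hn⟩ : ∃ n, finrank ℝ E = n + 1 := Nat.exists_eq_add_one.2 finrank_pos
  have hmoment := integral_Ioi_rpow_add_two_mul_exp_neg_sq (neg_one_lt_zero.trans_le n.cast_nonneg)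
  rw [show (n : ℝ) + 2 = (n + 2 : ℕ) by push_cast; ring] at hmoment
  simp only [rpow_natCast] at hmoment
  rw [integral_fun_norm_addHaar μ (fun t => t ^ 2 * exp (-t ^ 2)),
    integral_fun_norm_addHaar μ (fun t => exp (-t ^ 2)), hn, Nat.add_sub_cancel]
  simp only [smul_eq_mul, ← mul_assoc, ← pow_add, hmoment, nsmul_eq_mul]
  push_cast
  ring

end GaussianMoments

theorem Function.Odd.integral_eq_zero {G F : Type*} [MeasurableSpace G] [AddGroup G]
    [MeasurableNeg G] [NormedAddCommGroup F] [NormedSpace ℝ F] {f : G → F} (hf : f.Odd)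
    (μ : Measure G) [μ.IsNegInvariant] : ∫ x, f x ∂μ = 0 := by
  have : IsAddTorsionFree F := .of_isTorsionFree ℝ F
  simpa [hf _, integral_neg, neg_eq_self] using integral_neg_eq_self f μ

theorem abs_sub_sub_inner_gradient_le {E : Type*} [NormedAddCommGroup E] [InnerProductSpace ℝ E]
    [CompleteSpace E] {f : E → ℝ} {L : ℝ} (hf : Differentiable ℝ f)
    (hL : ∀ x y, ‖gradient f x - gradient f y‖ ≤ L * ‖x - y‖) (x v : E) :
    |f (x + v) - f x - ⟪gradient f x, v⟫| ≤ L / 2 * ‖v‖ ^ 2 := by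
  set φ : ℝ → ℝ := fun t => f (x + t • v) - f x - t * ⟪gradient f x, v⟫
  have hφ (t : ℝ) : HasDerivAt φ ⟪gradient f (x + t • v) - gradient f x, v⟫ t := by
    have hline : HasDerivAt (fun s : ℝ => x + s • v) v t := by
      simpa using ((hasDerivAt_id t).smul_const v).const_add x
    refine ((((hf _).hasGradientAt.hasFDerivAt.comp_hasDerivAt t hline).sub_const (f x)).sub
      ((hasDerivAt_id t).mul_const ⟪gradient f x, v⟫)).congr_deriv ?_
    simp [inner_sub_left]
  have hB (t : ℝ) : HasDerivAt (fun t => L / 2 * ‖v‖ ^ 2 * t ^ 2) (L * ‖v‖ ^ 2 * t) t := by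
    refine ((hasDerivAt_pow 2 t).const_mul (L / 2 * ‖v‖ ^ 2)).congr_deriv ?_
    norm_num
    ring
  have hbound : ∀ t ∈ Ico (0 : ℝ) 1,
      ‖⟪gradient f (x + t • v) - gradient f x, v⟫‖ ≤ L * ‖v‖ ^ 2 * t := fun t ht =>
    calc ‖⟪gradient f (x + t • v) - gradient f x, v⟫‖
        ≤ ‖gradient f (x + t • v) - gradient f x‖ * ‖v‖ := norm_inner_le_norm _ _
      _ ≤ L * ‖t • v‖ * ‖v‖ := by gcongr; simpa using hL (x + t • v) x
      _ = L * ‖v‖ ^ 2 * t := by rw [norm_smul, Real.norm_of_nonneg ht.1]; ring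
  simpa [φ] using image_norm_le_of_norm_deriv_right_le_deriv_boundary
    (fun t _ => (hφ t).continuousAt.continuousWithinAt) (fun t _ => (hφ t).hasDerivWithinAt)
    (by simp [φ]) hB hbound (right_mem_Icc.2 zero_le_one)

section GaussianSmoothing

variable {E : Type*} [NormedAddCommGroup E] [InnerProductSpace ℝ E] [FiniteDimensional ℝ E]
  [MeasurableSpace E] [BorelSpace E] (μ : Measure E) [μ.IsAddHaarMeasure]
  {f : E → ℝ} {L : ℝ}

theorem abs_integral_comp_add_mul_exp_neg_norm_sq_sub_le (hf : Differentiable ℝ f)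
    (hL : ∀ x y, ‖gradient f x - gradient f y‖ ≤ L * ‖x - y‖) (A : E →L[ℝ] E) (x : E) :
    |∫ u, f (x + A u) * exp (-‖u‖ ^ 2) ∂μ - f x * ∫ u, exp (-‖u‖ ^ 2) ∂μ| ≤
      L / 2 * ‖A‖ ^ 2 * ∫ u, ‖u‖ ^ 2 * exp (-‖u‖ ^ 2) ∂μ := by
  set g := gradient f x
  set R : E → ℝ := fun u => f (x + A u) - f x - ⟪g, A u⟫
  have hR (u : E) : ‖R u * exp (-‖u‖ ^ 2)‖ ≤ L / 2 * ‖A‖ ^ 2 * (‖u‖ ^ 2 * exp (-‖u‖ ^ 2)) := by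
    rcases eq_or_ne u 0 with rfl | hu
    · simp [R]
    have hL0 : 0 ≤ L := nonneg_of_mul_nonneg_left ((norm_nonneg _).trans (hL u 0))
      (by simpa using hu)
    rw [norm_mul, Real.norm_eq_abs, Real.norm_of_nonneg (exp_pos _).le, ← mul_assoc]
    gcongr
    calc |R u| ≤ L / 2 * ‖A u‖ ^ 2 := abs_sub_sub_inner_gradient_le hf hL x (A u)
      _ ≤ L / 2 * (‖A‖ * ‖u‖) ^ 2 := by gcongr; exact A.le_opNorm u
      _ = L / 2 * ‖A‖ ^ 2 * ‖u‖ ^ 2 := by ring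
  have hfc := hf.continuous
  have hRint : Integrable (fun u => R u * exp (-‖u‖ ^ 2)) μ :=
    ((integrable_norm_pow_mul_exp_neg_norm_sq μ 2).const_mul _).mono'
      (by simp only [R]; fun_prop) (ae_of_all _ hR)
  have hG : Integrable (fun u : E => exp (-‖u‖ ^ 2)) μ := by
    simpa using integrable_norm_pow_mul_exp_neg_norm_sq μ 0
  have hlin : Integrable (fun u => ⟪g, A u⟫ * exp (-‖u‖ ^ 2)) μ := by
    refine ((integrable_norm_pow_mul_exp_neg_norm_sq μ 1).const_mul (‖g‖ * ‖A‖)).mono'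
      (by fun_prop) (ae_of_all _ fun u => ?_)
    rw [norm_mul, Real.norm_of_nonneg (exp_pos _).le, pow_one, ← mul_assoc]
    gcongr
    calc ‖⟪g, A u⟫‖ ≤ ‖g‖ * ‖A u‖ := norm_inner_le_norm _ _
      _ ≤ ‖g‖ * (‖A‖ * ‖u‖) := by gcongr; exact A.le_opNorm u
      _ = ‖g‖ * ‖A‖ * ‖u‖ := by ring
  have hodd : ∫ u, ⟪g, A u⟫ * exp (-‖u‖ ^ 2) ∂μ = 0 :=
    Function.Odd.integral_eq_zero (fun u => by simp) μ
  have hsplit : ∫ u, f (x + A u) * exp (-‖u‖ ^ 2) ∂μ =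
      ∫ u, R u * exp (-‖u‖ ^ 2) ∂μ + f x * ∫ u, exp (-‖u‖ ^ 2) ∂μ +
        ∫ u, ⟪g, A u⟫ * exp (-‖u‖ ^ 2) ∂μ := by
    rw [← integral_const_mul, ← integral_add hRint (hG.const_mul _),
      ← integral_add (f := fun u => R u * exp (-‖u‖ ^ 2) + f x * exp (-‖u‖ ^ 2))
        (hRint.add (hG.const_mul _)) hlin]
    congr 1 with u
    simp only [R]
    ring
  rw [hsplit, hodd, add_zero, add_sub_cancel_right, ← integral_const_mul, ← Real.norm_eq_abs]
  exact norm_integral_le_of_norm_le ((integrable_norm_pow_mul_exp_neg_norm_sq μ 2).const_mul _)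
    (ae_of_all _ hR)

end GaussianSmoothing

theorem stmt_7_general {d : ℕ} (f : Vec d → ℝ) (L : ℝ)
    (hdiff : Differentiable ℝ f)
    (hL : ∀ x y : Vec d, ‖gradient f x - gradient f y‖ ≤ L * ‖x - y‖)
    (S : Matrix (Fin d) (Fin d) ℝ) :
    ∀ x : Vec d, |gsmooth f S x - f x| ≤ L * (d : ℝ) / 4 * opNorm S ^ 2 := by
  intro x
  set P : ℝ := π ^ ((d : ℝ) / 2) with hP_def
  have hP : 0 < P := by positivity
  have hmass : ∫ u : Vec d, exp (-‖u‖ ^ 2) = P := by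
    simpa using GaussianFourier.integral_rexp_neg_mul_sq_norm (V := Vec d) one_pos
  have key := abs_integral_comp_add_mul_exp_neg_norm_sq_sub_le volume hdiff hL
    (toEuclideanLin S).toContinuousLinearMap x
  rw [integral_norm_sq_mul_exp_neg_norm_sq, hmass, finrank_euclideanSpace_fin] at key
  have hsub : gsmooth f S x - f x =
      P⁻¹ * ((∫ u, f (x + mApp S u) * exp (-‖u‖ ^ 2)) - f x * P) := by
    rw [gsmooth, ← hP_def]
    field_simp
  rw [hsub, abs_mul, abs_of_pos (inv_pos.2 hP)]
  calc P⁻¹ * |(∫ u, f (x + mApp S u) * exp (-‖u‖ ^ 2)) - f x * P|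
      ≤ P⁻¹ * (L / 2 * opNorm S ^ 2 * (d / 2 * P)) := by gcongr; exact key
    _ = L * d / 4 * opNorm S ^ 2 := by field_simp; ring

/-- for `L`-smooth `f`, `|f_Σ(x) − f(x)| ≤ (L d / 4) ‖Σ‖²`. -/
theorem stmt_7 {d : ℕ} (f : Vec d → ℝ) (L : ℝ)
    (hdiff : Differentiable ℝ f)
    (hL : ∀ x y : Vec d, ‖gradient f x - gradient f y‖ ≤ L * ‖x - y‖)
    (S : Matrix (Fin d) (Fin d) ℝ) (hsymm : S.IsSymm) (hinv : IsUnit S.det) :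
    ∀ x : Vec d, |gsmooth f S x - f x| ≤ L * (d : ℝ) / 4 * opNorm S ^ 2 :=
  stmt_7_general f L hdiff hL S

end
end

section
/- Let f:ℝ^d→ℝ be L-smooth and Σ∈ℝ^{d×d} be symmetric and invertible. Then for every x∈ℝ^d, ‖∇f(x)‖² ≤ 2‖∇f_Σ(x)‖² + (L²·‖Σ‖⁴·‖Σ^{-1}‖²·(3+d)³)/4; moreover the same inequality holds with the roles of ∇f and ∇f_Σ interchanged, i.e., ‖∇f_Σ(x)‖² ≤ 2‖∇f(x)‖² + (L²·‖Σ‖⁴·‖Σ^{-1}‖²·(3+d)³)/4. -/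
/-
Differentiating under the integral sign, `∇f_Σ(x)` is the Gaussian average of `∇f(x + Σu)`, so
the Lipschitz bound on `∇f` gives `‖∇f_Σ(x) - ∇f(x)‖ ≤ L ‖Σ‖ E‖u‖`. Passing to polar coordinates,
`E‖u‖ = Γ((d+1)/2) / Γ(d/2) ≤ √(d/2)` by log-convexity of `Γ`. Both inequalities then follow from
`(a + b)² ≤ 2a² + 2b²`, since `‖Σ‖ ‖Σ⁻¹‖ ≥ 1` and `4d ≤ (3 + d)³`.
-/

open MeasureTheory Filter Matrix

noncomputable section

open Real Set Module Metric
open scoped NNReal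

lemma Real.Gamma_add_half_le {s : ℝ} (hs : 0 < s) : Gamma (s + 1 / 2) ≤ √s * Gamma s := by
  have h := Gamma_mul_add_mul_le_rpow_Gamma_mul_rpow_Gamma hs (by linarith : 0 < s + 1)
    (by norm_num : (0 : ℝ) < 1 / 2) (by norm_num : (0 : ℝ) < 1 / 2) (by norm_num)
  have hΓ := (Gamma_pos_of_pos hs).le
  rw [Gamma_add_one hs.ne', mul_rpow hs.le hΓ, ← sqrt_eq_rpow, ← sqrt_eq_rpow] at h
  calc Gamma (s + 1 / 2) = Gamma (1 / 2 * s + 1 / 2 * (s + 1)) := by ring_nf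
    _ ≤ √(Gamma s) * (√s * √(Gamma s)) := h
    _ = √s * Gamma s := by rw [mul_left_comm, mul_self_sqrt hΓ]

lemma integral_Ioi_pow_mul_exp_neg_sq (n : ℕ) :
    ∫ y in Ioi (0 : ℝ), y ^ n * exp (-y ^ 2) = Gamma ((n + 1) / 2) / 2 := by
  have h := integral_rpow_mul_exp_neg_mul_rpow (p := 2) (q := n) (b := 1) two_pos
    (by linarith [n.cast_nonneg (α := ℝ)]) one_pos
  simp only [rpow_natCast, one_rpow, neg_mul, one_mul, rpow_two] at h
  rw [h]; ring

section RadialMoment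
variable {E : Type*} [NormedAddCommGroup E] [NormedSpace ℝ E] [FiniteDimensional ℝ E]
  [MeasurableSpace E] [BorelSpace E] (μ : Measure E) [μ.IsAddHaarMeasure]

theorem integral_norm_mul_exp_neg_norm_sq_le :
    ∫ x, ‖x‖ * exp (-‖x‖ ^ 2) ∂μ ≤ √(finrank ℝ E / 2) * ∫ x, exp (-‖x‖ ^ 2) ∂μ := by
  rcases subsingleton_or_nontrivial E with hE | hE
  · have h0 : ∀ x : E, ‖x‖ = 0 := fun x => by rw [Subsingleton.elim x 0, norm_zero]
    simp only [h0, zero_mul, integral_zero]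
    exact mul_nonneg (sqrt_nonneg _) (integral_nonneg fun x => (exp_pos _).le)
  set n := finrank ℝ E
  have hn : 1 ≤ n := finrank_pos
  have h1 :
      ∫ y in Ioi (0 : ℝ), y ^ (n - 1) • (y * exp (-y ^ 2)) = Gamma (n / 2 + 1 / 2) / 2 := by
    rw [← setIntegral_congr_fun measurableSet_Ioi fun y _ => by
      rw [smul_eq_mul, ← mul_assoc, ← pow_succ, Nat.sub_add_cancel hn],
      integral_Ioi_pow_mul_exp_neg_sq]
    ring_nf
  have h2 : ∫ y in Ioi (0 : ℝ), y ^ (n - 1) • exp (-y ^ 2) = Gamma (n / 2) / 2 := by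
    simp only [smul_eq_mul]
    rw [integral_Ioi_pow_mul_exp_neg_sq, Nat.cast_sub hn]
    ring_nf
  rw [integral_fun_norm_addHaar μ (fun y => y * exp (-y ^ 2)),
    integral_fun_norm_addHaar μ (fun y => exp (-y ^ 2)), h1, h2]
  have hΓ := Gamma_add_half_le (s := n / 2) (by positivity)
  simp only [nsmul_eq_mul, smul_eq_mul]
  have hV : 0 ≤ μ.real (ball 0 1) := measureReal_nonneg
  calc (n : ℝ) * (μ.real (ball 0 1) * (Gamma (n / 2 + 1 / 2) / 2))
      ≤ n * (μ.real (ball 0 1) * (√(n / 2) * Gamma (n / 2) / 2)) := by gcongr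
    _ = _ := by ring
end RadialMoment

section LipschitzFDeriv
variable {E : Type*} [NormedAddCommGroup E] [NormedSpace ℝ E] {f : E → ℝ} {K : ℝ≥0}

lemma norm_fderiv_le_of_lipschitzWith (hf' : LipschitzWith K (fderiv ℝ f)) (y z : E) :
    ‖fderiv ℝ f y‖ ≤ ‖fderiv ℝ f z‖ + K * ‖y - z‖ :=
  (norm_le_insert' _ _).trans (by gcongr; exact hf'.norm_sub_le y z)

lemma abs_le_of_lipschitzWith_fderiv (hf : Differentiable ℝ f)
    (hf' : LipschitzWith K (fderiv ℝ f)) (y z : E) :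
    |f y| ≤ |f z| + (‖fderiv ℝ f z‖ + K * ‖y - z‖) * ‖y - z‖ := by
  have hbound : ∀ w ∈ closedBall z ‖y - z‖, ‖fderiv ℝ f w‖ ≤ ‖fderiv ℝ f z‖ + K * ‖y - z‖ :=
    fun w hw => (norm_fderiv_le_of_lipschitzWith hf' w z).trans <| by
      gcongr; rwa [mem_closedBall, dist_eq_norm] at hw
  have h := (convex_closedBall z ‖y - z‖).norm_image_sub_le_of_norm_fderiv_le
    (fun w _ => hf w) hbound (mem_closedBall_self (norm_nonneg _))
    (by rw [mem_closedBall, dist_eq_norm])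
  rw [Real.norm_eq_abs] at h
  linarith [abs_sub_abs_le_abs_sub (f y) (f z)]

end LipschitzFDeriv

lemma Integrable.norm_mul_of_norm_sq_mul {V : Type*} [NormedAddCommGroup V] [MeasurableSpace V]
    [OpensMeasurableSpace V] {μ : Measure V} {ρ : V → ℝ} (hρ : ∀ u, 0 ≤ ρ u) (h0 : Integrable ρ μ)
    (h2 : Integrable (fun u => ‖u‖ ^ 2 * ρ u) μ) : Integrable (fun u => ‖u‖ * ρ u) μ := by
  refine (h0.add h2).mono' (continuous_norm.aestronglyMeasurable.mul h0.1) <|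
    .of_forall fun u => ?_
  have : ‖u‖ ≤ 1 + ‖u‖ ^ 2 := by nlinarith [sq_nonneg (‖u‖ - 1)]
  rw [Real.norm_eq_abs, abs_of_nonneg (mul_nonneg (norm_nonneg u) (hρ u)), Pi.add_apply]
  nlinarith [mul_le_mul_of_nonneg_right this (hρ u)]

section WeightedAverage
variable {E V : Type*} [NormedAddCommGroup E] [NormedSpace ℝ E]
  [NormedAddCommGroup V] [NormedSpace ℝ V] {f : E → ℝ} {K : ℝ≥0} (A : V →L[ℝ] E)

lemma norm_fderiv_comp_add_sub_le (hf' : LipschitzWith K (fderiv ℝ f)) (x : E) (u : V) :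
    ‖fderiv ℝ f (x + A u) - fderiv ℝ f x‖ ≤ K * (‖A‖ * ‖u‖) :=
  (hf'.norm_sub_le _ x).trans <| by rw [add_sub_cancel_left]; gcongr; exact A.le_opNorm u

variable [MeasurableSpace V] [BorelSpace V] {μ : Measure V} {ρ : V → ℝ}

lemma integrable_comp_add_mul (hf : Differentiable ℝ f) (hf' : LipschitzWith K (fderiv ℝ f))
    (hρ : ∀ u, 0 ≤ ρ u) (h0 : Integrable ρ μ) (h2 : Integrable (fun u => ‖u‖ ^ 2 * ρ u) μ)
    (x : E) :
    Integrable (fun u => f (x + A u) * ρ u) μ := by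
  have h1 := Integrable.norm_mul_of_norm_sq_mul hρ h0 h2
  refine (((h0.const_mul |f x|).add (h1.const_mul (‖fderiv ℝ f x‖ * ‖A‖))).add
    (h2.const_mul (K * ‖A‖ ^ 2))).mono'
    ((hf.continuous.comp (continuous_const.add A.continuous)).aestronglyMeasurable.mul h0.1)
    (.of_forall fun u => ?_)
  have hAu : ‖A u‖ ≤ ‖A‖ * ‖u‖ := A.le_opNorm u
  have hfu := abs_le_of_lipschitzWith_fderiv hf hf' (x + A u) x
  rw [add_sub_cancel_left] at hfu
  rw [Real.norm_eq_abs, abs_mul, abs_of_nonneg (hρ u)]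
  calc |f (x + A u)| * ρ u
      ≤ (|f x| + (‖fderiv ℝ f x‖ + K * (‖A‖ * ‖u‖)) * (‖A‖ * ‖u‖)) * ρ u := by
        gcongr
        · exact hρ u
        · exact hfu.trans (by gcongr)
    _ = _ := by simp only [Pi.add_apply]; ring

lemma hasFDerivAt_integral_comp_add_mul [SecondCountableTopology V] (hf : Differentiable ℝ f)
    (hf' : LipschitzWith K (fderiv ℝ f)) (hρ : ∀ u, 0 ≤ ρ u) (h0 : Integrable ρ μ)
    (h2 : Integrable (fun u => ‖u‖ ^ 2 * ρ u) μ) (x : E) :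
    HasFDerivAt (fun x => ∫ u, f (x + A u) * ρ u ∂μ)
      (∫ u, ρ u • fderiv ℝ f (x + A u) ∂μ) x := by
  have h1 := Integrable.norm_mul_of_norm_sq_mul hρ h0 h2
  have hshift : Continuous fun u => x + A u := continuous_const.add A.continuous
  refine hasFDerivAt_integral_of_dominated_of_fderiv_le (ball_mem_nhds x one_pos)
    (.of_forall fun x' => (integrable_comp_add_mul A hf hf' hρ h0 h2 x').1)
    (integrable_comp_add_mul A hf hf' hρ h0 h2 x)
    (h0.1.smul (hf'.continuous.comp hshift).aestronglyMeasurable)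
    (bound := fun u => (‖fderiv ℝ f x‖ + K) * ρ u + K * ‖A‖ * (‖u‖ * ρ u))
    (.of_forall fun u x' hx' => ?_) ((h0.const_mul _).add (h1.const_mul _))
    (.of_forall fun u x' _ => ((hf _).hasFDerivAt.comp x'
      ((hasFDerivAt_id x').add_const (A u))).mul_const (ρ u))
  rw [mem_ball, dist_eq_norm] at hx'
  have hdist : ‖x' + A u - x‖ ≤ 1 + ‖A‖ * ‖u‖ := by
    rw [add_sub_right_comm]
    exact (norm_add_le _ _).trans (add_le_add hx'.le (A.le_opNorm u))
  rw [norm_smul, Real.norm_eq_abs, abs_of_nonneg (hρ u)]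
  calc ρ u * ‖fderiv ℝ f (x' + A u)‖ ≤ ρ u * (‖fderiv ℝ f x‖ + K * (1 + ‖A‖ * ‖u‖)) := by
        gcongr
        · exact hρ u
        · exact (norm_fderiv_le_of_lipschitzWith hf' _ x).trans (by gcongr)
    _ = _ := by ring

lemma integrable_smul_fderiv_comp_add [SecondCountableTopology V]
    (hf' : LipschitzWith K (fderiv ℝ f)) (hρ : ∀ u, 0 ≤ ρ u) (h0 : Integrable ρ μ)
    (h1 : Integrable (fun u => ‖u‖ * ρ u) μ) (x : E) :
    Integrable (fun u => ρ u • fderiv ℝ f (x + A u)) μ := by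
  refine ((h0.const_mul ‖fderiv ℝ f x‖).add (h1.const_mul (K * ‖A‖))).mono'
    (h0.1.smul (hf'.continuous.comp (continuous_const.add A.continuous)).aestronglyMeasurable)
    (.of_forall fun u => ?_)
  rw [norm_smul, Real.norm_eq_abs, abs_of_nonneg (hρ u)]
  calc ρ u * ‖fderiv ℝ f (x + A u)‖ ≤ ρ u * (‖fderiv ℝ f x‖ + K * (‖A‖ * ‖u‖)) := by
        gcongr
        · exact hρ u
        · exact (norm_le_insert' _ _).trans
            (by gcongr; exact norm_fderiv_comp_add_sub_le A hf' x u)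
    _ = _ := by simp only [Pi.add_apply]; ring

lemma norm_integral_smul_fderiv_sub_le [SecondCountableTopology V]
    (hf' : LipschitzWith K (fderiv ℝ f)) (hρ : ∀ u, 0 ≤ ρ u) (h0 : Integrable ρ μ)
    (h1 : Integrable (fun u => ‖u‖ * ρ u) μ) (x : E) :
    ‖∫ u, ρ u • fderiv ℝ f (x + A u) ∂μ - (∫ u, ρ u ∂μ) • fderiv ℝ f x‖ ≤
      K * ‖A‖ * ∫ u, ‖u‖ * ρ u ∂μ := by
  rw [← integral_smul_const ρ (fderiv ℝ f x),
    ← integral_sub (integrable_smul_fderiv_comp_add A hf' hρ h0 h1 x) (h0.smul_const _),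
    ← integral_const_mul]
  refine norm_integral_le_of_norm_le (h1.const_mul _) (.of_forall fun u => ?_)
  rw [← smul_sub, norm_smul, Real.norm_eq_abs, abs_of_nonneg (hρ u)]
  calc ρ u * ‖fderiv ℝ f (x + A u) - fderiv ℝ f x‖ ≤ ρ u * (K * (‖A‖ * ‖u‖)) := by
        gcongr
        · exact hρ u
        · exact norm_fderiv_comp_add_sub_le A hf' x u
    _ = _ := by ring

end WeightedAverage

section Gaussian
variable {V : Type*} [NormedAddCommGroup V] [InnerProductSpace ℝ V]

variable (V) in
def gaussianDensity (u : V) : ℝ := (π ^ (finrank ℝ V / 2 : ℝ))⁻¹ * exp (-‖u‖ ^ 2)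

lemma gaussianDensity_nonneg (u : V) : 0 ≤ gaussianDensity V u := by
  unfold gaussianDensity; positivity

variable [FiniteDimensional ℝ V] [MeasurableSpace V] [BorelSpace V]

lemma integrable_exp_neg_mul_norm_sq {b : ℝ} (hb : 0 < b) :
    Integrable fun u : V => exp (-b * ‖u‖ ^ 2) :=
  .of_integral_ne_zero <| by rw [GaussianFourier.integral_rexp_neg_mul_sq_norm hb]; positivity

lemma integral_gaussianDensity : ∫ u, gaussianDensity V u = 1 := by
  have h := GaussianFourier.integral_rexp_neg_mul_sq_norm (V := V) one_pos
  simp only [neg_mul, one_mul, div_one] at h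
  simp only [gaussianDensity]
  rw [integral_const_mul, h, inv_mul_cancel₀ (by positivity)]

lemma integrable_gaussianDensity : Integrable (gaussianDensity V) := by
  have h := (integrable_exp_neg_mul_norm_sq (V := V) one_pos).const_mul
    (π ^ (finrank ℝ V / 2 : ℝ))⁻¹
  simp only [neg_mul, one_mul] at h
  exact h

lemma integrable_norm_sq_mul_gaussianDensity :
    Integrable fun u => ‖u‖ ^ 2 * gaussianDensity V u := by
  refine ((integrable_exp_neg_mul_norm_sq (V := V) (b := 1 / 2) (by norm_num)).const_mul
    (2 * (π ^ (finrank ℝ V / 2 : ℝ))⁻¹)).mono'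
    (by unfold gaussianDensity; fun_prop) (.of_forall fun u => ?_)
  have hexp : ‖u‖ ^ 2 * exp (-‖u‖ ^ 2) ≤ 2 * exp (-(1 / 2) * ‖u‖ ^ 2) := by
    have h := add_one_le_exp ((1 / 2) * ‖u‖ ^ 2)
    calc ‖u‖ ^ 2 * exp (-‖u‖ ^ 2) ≤ 2 * exp ((1 / 2) * ‖u‖ ^ 2) * exp (-‖u‖ ^ 2) := by
          gcongr; linarith
      _ = 2 * exp (-(1 / 2) * ‖u‖ ^ 2) := by rw [mul_assoc, ← exp_add]; ring_nf
  rw [Real.norm_eq_abs, abs_of_nonneg (mul_nonneg (sq_nonneg _) (gaussianDensity_nonneg u)),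
    gaussianDensity, mul_left_comm]
  calc (π ^ (finrank ℝ V / 2 : ℝ))⁻¹ * (‖u‖ ^ 2 * exp (-‖u‖ ^ 2))
      ≤ (π ^ (finrank ℝ V / 2 : ℝ))⁻¹ * (2 * exp (-(1 / 2) * ‖u‖ ^ 2)) := by gcongr
    _ = _ := by ring

lemma integral_norm_mul_gaussianDensity_le :
    ∫ u, ‖u‖ * gaussianDensity V u ≤ √(finrank ℝ V / 2) := by
  have h := GaussianFourier.integral_rexp_neg_mul_sq_norm (V := V) one_pos
  simp only [neg_mul, one_mul, div_one] at h
  have hm := integral_norm_mul_exp_neg_norm_sq_le (volume : Measure V)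
  rw [h] at hm
  simp only [gaussianDensity, mul_left_comm ‖_‖, integral_const_mul]
  calc (π ^ (finrank ℝ V / 2 : ℝ))⁻¹ * ∫ u : V, ‖u‖ * exp (-‖u‖ ^ 2)
      ≤ (π ^ (finrank ℝ V / 2 : ℝ))⁻¹ * (√(finrank ℝ V / 2) * π ^ (finrank ℝ V / 2 : ℝ)) := by
        gcongr
    _ = √(finrank ℝ V / 2) := by field_simp

end Gaussian

lemma norm_gradient_sub_gradient {F : Type*} [NormedAddCommGroup F] [InnerProductSpace ℝ F]
    [CompleteSpace F] (f g : F → ℝ) (x y : F) :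
    ‖gradient f x - gradient g y‖ = ‖fderiv ℝ f x - fderiv ℝ g y‖ := by
  rw [gradient, gradient, ← map_sub, LinearIsometryEquiv.norm_map]

lemma norm_sq_le_two_mul_norm_sq_add {F : Type*} [SeminormedAddCommGroup F] {a b : F} {M C : ℝ}
    (h : ‖a - b‖ ≤ M) (hC : 2 * M ^ 2 ≤ C) : ‖a‖ ^ 2 ≤ 2 * ‖b‖ ^ 2 + C := by
  have : ‖a‖ ≤ ‖b‖ + M := (norm_le_insert' a b).trans (by linarith)
  nlinarith [sq_nonneg (‖b‖ - M), norm_nonneg a]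

lemma gsmooth_eq_integral {d : ℕ} (f : Vec d → ℝ) (S : Matrix (Fin d) (Fin d) ℝ) :
    gsmooth f S =
      fun x => ∫ u, f (x + toEuclideanCLM (𝕜 := ℝ) S u) * gaussianDensity (Vec d) u := by
  ext x
  simp only [gsmooth, gaussianDensity, finrank_euclideanSpace_fin, mul_left_comm (f _),
    integral_const_mul]
  rfl

lemma norm_fderiv_gsmooth_sub_le {d : ℕ} {f : Vec d → ℝ} {K : ℝ≥0} (hf : Differentiable ℝ f)
    (hf' : LipschitzWith K (fderiv ℝ f)) (S : Matrix (Fin d) (Fin d) ℝ) (x : Vec d) :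
    ‖fderiv ℝ (gsmooth f S) x - fderiv ℝ f x‖ ≤ K * opNorm S * √(d / 2) := by
  have h1 := Integrable.norm_mul_of_norm_sq_mul (gaussianDensity_nonneg (V := Vec d))
    integrable_gaussianDensity integrable_norm_sq_mul_gaussianDensity
  have hgap := norm_integral_smul_fderiv_sub_le (toEuclideanCLM (𝕜 := ℝ) S) hf'
    gaussianDensity_nonneg integrable_gaussianDensity h1 x
  rw [integral_gaussianDensity, one_smul] at hgap
  rw [gsmooth_eq_integral, (hasFDerivAt_integral_comp_add_mul _ hf hf'
    gaussianDensity_nonneg integrable_gaussianDensity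
    integrable_norm_sq_mul_gaussianDensity x).fderiv]
  refine hgap.trans ?_
  have hm := integral_norm_mul_gaussianDensity_le (V := Vec d)
  rw [finrank_euclideanSpace_fin] at hm
  exact mul_le_mul_of_nonneg_left hm (by positivity)

lemma one_le_opNorm_mul_opNorm_inv {d : ℕ} (hd : 0 < d) {S : Matrix (Fin d) (Fin d) ℝ}
    (hS : IsUnit S.det) : 1 ≤ opNorm S * opNorm S⁻¹ := by
  have : Nonempty (Fin d) := ⟨⟨0, hd⟩⟩
  calc (1 : ℝ) = ‖toEuclideanCLM (𝕜 := ℝ) (S * S⁻¹)‖ := by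
        rw [Matrix.mul_nonsing_inv S hS, map_one, norm_one]
    _ ≤ opNorm S * opNorm S⁻¹ := by rw [map_mul]; exact norm_mul_le _ _

lemma two_mul_sq_le_of_isUnit_det {d : ℕ} (L : ℝ) {S : Matrix (Fin d) (Fin d) ℝ}
    (hS : IsUnit S.det) :
    2 * (‖L‖ * opNorm S * √(d / 2)) ^ 2 ≤
      L ^ 2 * opNorm S ^ 4 * opNorm S⁻¹ ^ 2 * ((3 : ℝ) + d) ^ 3 / 4 := by
  rcases Nat.eq_zero_or_pos d with rfl | hd
  · have : 0 ≤ L ^ 2 * opNorm S ^ 4 * opNorm S⁻¹ ^ 2 * ((3 : ℝ) + 0) ^ 3 / 4 := by positivity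
    simpa using this
  have hκ := one_le_opNorm_mul_opNorm_inv hd hS
  rw [mul_pow, mul_pow, sq_sqrt (by positivity), Real.norm_eq_abs, sq_abs]
  have h4d : 4 * (d : ℝ) ≤ (opNorm S * opNorm S⁻¹) ^ 2 * (3 + d) ^ 3 :=
    calc 4 * (d : ℝ) ≤ 1 * (3 + d) ^ 3 := by
          nlinarith [pow_nonneg (Nat.cast_nonneg d : (0 : ℝ) ≤ d) 3, sq_nonneg (d : ℝ)]
      _ ≤ (opNorm S * opNorm S⁻¹) ^ 2 * (3 + d) ^ 3 := by gcongr; nlinarith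
  nlinarith [mul_le_mul_of_nonneg_left h4d (by positivity : 0 ≤ L ^ 2 * opNorm S ^ 2)]

theorem stmt_9_general {d : ℕ} (f : Vec d → ℝ) (L : ℝ)
    (hdiff : Differentiable ℝ f)
    (hL : ∀ x y : Vec d, ‖gradient f x - gradient f y‖ ≤ L * ‖x - y‖)
    (S : Matrix (Fin d) (Fin d) ℝ) (hinv : IsUnit S.det) :
    ∀ x : Vec d,
      ‖gradient f x‖ ^ 2 ≤ 2 * ‖gradient (gsmooth f S) x‖ ^ 2 +
        L ^ 2 * opNorm S ^ 4 * opNorm S⁻¹ ^ 2 * ((3 : ℝ) + d) ^ 3 / 4 ∧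
      ‖gradient (gsmooth f S) x‖ ^ 2 ≤ 2 * ‖gradient f x‖ ^ 2 +
        L ^ 2 * opNorm S ^ 4 * opNorm S⁻¹ ^ 2 * ((3 : ℝ) + d) ^ 3 / 4 := by
  intro x
  have hf' : LipschitzWith ‖L‖₊ (fderiv ℝ f) := .of_dist_le_mul fun a b => by
    rw [dist_eq_norm, dist_eq_norm, ← norm_gradient_sub_gradient, coe_nnnorm]
    exact (hL a b).trans (by gcongr; exact le_norm_self L)
  have hgap : ‖gradient (gsmooth f S) x - gradient f x‖ ≤ ‖L‖ * opNorm S * √(d / 2) := by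
    rw [norm_gradient_sub_gradient]
    exact norm_fderiv_gsmooth_sub_le hdiff hf' S x
  have hC := two_mul_sq_le_of_isUnit_det L hinv
  refine ⟨norm_sq_le_two_mul_norm_sq_add ?_ hC, norm_sq_le_two_mul_norm_sq_add hgap hC⟩
  rwa [norm_sub_rev]

/-- squared-gradient comparison between `f` and `f_Σ`, in both directions. -/
theorem stmt_9 {d : ℕ} (f : Vec d → ℝ) (L : ℝ)
    (hdiff : Differentiable ℝ f)
    (hL : ∀ x y : Vec d, ‖gradient f x - gradient f y‖ ≤ L * ‖x - y‖)
    (S : Matrix (Fin d) (Fin d) ℝ) (hsymm : S.IsSymm) (hinv : IsUnit S.det) :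
    ∀ x : Vec d,
      ‖gradient f x‖ ^ 2 ≤ 2 * ‖gradient (gsmooth f S) x‖ ^ 2 +
        L ^ 2 * opNorm S ^ 4 * opNorm S⁻¹ ^ 2 * ((3 : ℝ) + d) ^ 3 / 4 ∧
      ‖gradient (gsmooth f S) x‖ ^ 2 ≤ 2 * ‖gradient f x‖ ^ 2 +
        L ^ 2 * opNorm S ^ 4 * opNorm S⁻¹ ^ 2 * ((3 : ℝ) + d) ^ 3 / 4 :=
  stmt_9_general f L hdiff hL S hinv
end
end

section
/- Let f:ℝ^d→ℝ be measurable with at most polynomial growth, and let Σ, T ∈ℝ^{d×d} be symmetric and invertible. Then Σ² + T² is symmetric positive definite, and if H = √(Σ² + T²) denotes its (unique symmetric positive definite) square root, then (f_Σ)_T(x) = f_H(x) for every x∈ℝ^d; that is, smoothing by Σ and then by T equals smoothing by √(Σ²+T²). -/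
open MeasureTheory Filter Matrix

noncomputable section

/-! `Σ² + T² = ΣᵀΣ + TᵀT` is positive definite because `Σ` is invertible.

Let `γ` be the centred Gaussian measure with covariance `½ I`, whose density is the weight
`π^{-d/2} e^{-‖u‖²}` of `gsmooth`, so that `f_Σ(x) = ∫ f(x + Σu) dγ(u)`. Then
`(f_Σ)_T(x) = ∫∫ f(x + Tv + Σu) dγ(u) dγ(v)`, and the law of `Tv + Σu` under `γ ⊗ γ` is that of
`Hu` under `γ`: both characteristic functions equal `e^{-‖Ht‖²/4}`, because
`‖Tt‖² + ‖Σt‖² = ⟪(T² + Σ²)t, t⟫ = ‖Ht‖²` for symmetric `T`, `Σ`, `H`. Fubini applies because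
Gaussian measures have moments of all orders, which absorbs the polynomial growth of `f`. -/

open ProbabilityTheory Module ContinuousLinearMap
open scoped RealInnerProductSpace Real Complex

section SmoothingGaussian

variable {U V X W : Type*}
  [NormedAddCommGroup U] [InnerProductSpace ℝ U] [FiniteDimensional ℝ U]
  [MeasurableSpace U] [BorelSpace U]
  [NormedAddCommGroup V] [InnerProductSpace ℝ V] [FiniteDimensional ℝ V]
  [MeasurableSpace V] [BorelSpace V]
  [NormedAddCommGroup X] [InnerProductSpace ℝ X] [FiniteDimensional ℝ X]
  [MeasurableSpace X] [BorelSpace X]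
  [NormedAddCommGroup W] [InnerProductSpace ℝ W] [FiniteDimensional ℝ W]
  [MeasurableSpace W] [BorelSpace W]

variable (V) in
def smoothingGaussian : Measure V :=
  volume.withDensity fun u ↦ ENNReal.ofReal ((π ^ ((finrank ℝ V : ℝ) / 2))⁻¹ * rexp (-‖u‖ ^ 2))

lemma integral_smoothingGaussian {E : Type*} [NormedAddCommGroup E] [NormedSpace ℝ E] (g : V → E) :
    ∫ u, g u ∂smoothingGaussian V =
      (π ^ ((finrank ℝ V : ℝ) / 2))⁻¹ • ∫ u, rexp (-‖u‖ ^ 2) • g u := by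
  rw [smoothingGaussian, integral_withDensity_eq_integral_toReal_smul (by fun_prop)
    (.of_forall fun _ ↦ ENNReal.ofReal_lt_top), ← integral_smul]
  congr 1 with u
  rw [ENNReal.toReal_ofReal (by positivity), mul_smul]

instance isProbabilityMeasure_smoothingGaussian : IsProbabilityMeasure (smoothingGaussian V) := by
  have hgauss := GaussianFourier.integral_rexp_neg_mul_sq_norm (V := V) one_pos
  simp only [neg_mul, one_mul, div_one] at hgauss
  have hint : Integrable fun u : V ↦ rexp (-‖u‖ ^ 2) :=
    .of_integral_ne_zero (by rw [hgauss]; positivity)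
  constructor
  rw [smoothingGaussian, withDensity_apply _ MeasurableSet.univ, Measure.restrict_univ,
    ← ofReal_integral_eq_lintegral_ofReal (hint.const_mul _) (.of_forall fun _ ↦ by positivity),
    integral_const_mul, hgauss, inv_mul_cancel₀ (by positivity), ENNReal.ofReal_one]

lemma charFun_smoothingGaussian (t : V) :
    charFun (smoothingGaussian V) t = cexp (-‖t‖ ^ 2 / 4) := by
  have h := GaussianFourier.integral_cexp_neg_mul_sq_norm_add (V := V) (b := 1) (by simp)
    Complex.I t
  simp only [Complex.I_sq, neg_mul, one_mul, div_one] at h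
  have hintegrand (u : V) : rexp (-‖u‖ ^ 2) • cexp (⟪u, t⟫ * Complex.I)
      = cexp (-(‖u‖ : ℂ) ^ 2 + Complex.I * ⟪t, u⟫) := by
    rw [Complex.real_smul, Complex.ofReal_exp, ← Complex.exp_add, real_inner_comm]
    congr 1
    push_cast
    ring
  rw [charFun_apply, integral_smoothingGaussian]
  simp_rw [hintegrand, h, Complex.real_smul, ← mul_assoc]
  rw [Complex.ofReal_inv, Complex.ofReal_cpow Real.pi_pos.le, mul_one]
  push_cast
  rw [inv_mul_cancel₀ (by simp [Real.pi_ne_zero]), one_mul]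

instance isGaussian_smoothingGaussian : IsGaussian (smoothingGaussian V) := by
  refine isGaussian_iff_gaussian_charFun.2 ⟨0, (2⁻¹ : ℝ) • innerSL ℝ,
    (LinearMap.BilinForm.isPosSemidef_iff.2 isPosSemidef_inner).smul (by norm_num), fun t ↦ ?_⟩
  rw [charFun_smoothingGaussian]
  simp only [_root_.smul_apply, smul_eq_mul, innerSL_apply_apply ℝ, real_inner_self_eq_norm_sq,
    inner_zero_right]
  congr 1
  push_cast
  ring

lemma charFun_map_smoothingGaussian (C : V →L[ℝ] W) (t : W) :
    charFun ((smoothingGaussian V).map C) t = cexp (-‖C.adjoint t‖ ^ 2 / 4) := by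
  rw [charFun_apply, integral_map C.continuous.aemeasurable (by fun_prop),
    ← charFun_smoothingGaussian, charFun_apply]
  simp_rw [adjoint_inner_right]

lemma map_add_prod_smoothingGaussian (A : U →L[ℝ] W) (B : V →L[ℝ] W) (C : X →L[ℝ] W)
    (h : A ∘L A.adjoint + B ∘L B.adjoint = C ∘L C.adjoint) :
    ((smoothingGaussian U).prod (smoothingGaussian V)).map (fun p ↦ A p.1 + B p.2) =
      (smoothingGaussian X).map C := by
  refine Measure.ext_of_charFun (funext fun t ↦ ?_)
  have hsq : ‖A.adjoint t‖ ^ 2 + ‖B.adjoint t‖ ^ 2 = ‖C.adjoint t‖ ^ 2 := by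
    simpa [inner_add_left, apply_norm_sq_eq_inner_adjoint_left] using
      congrArg (fun L : W →L[ℝ] W ↦ ⟪L t, t⟫) h
  have hsqC : (‖A.adjoint t‖ : ℂ) ^ 2 + (‖B.adjoint t‖ : ℂ) ^ 2 = (‖C.adjoint t‖ : ℂ) ^ 2 :=
    mod_cast hsq
  rw [charFun_map_smoothingGaussian, charFun_apply, integral_map (by fun_prop) (by fun_prop)]
  simp_rw [inner_add_left, ← adjoint_inner_right A, ← adjoint_inner_right B, Complex.ofReal_add,
    add_mul, Complex.exp_add]
  rw [integral_prod_mul (f := fun u : U ↦ cexp (⟪u, A.adjoint t⟫ * Complex.I))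
    (g := fun v : V ↦ cexp (⟪v, B.adjoint t⟫ * Complex.I)), ← charFun_apply, ← charFun_apply,
    charFun_smoothingGaussian, charFun_smoothingGaussian, ← Complex.exp_add]
  congr 1
  linear_combination (-1 / 4 : ℂ) * hsqC

lemma integral_integral_smoothingGaussian_comp_add {E : Type*} [NormedAddCommGroup E]
    [NormedSpace ℝ E] (A : U →L[ℝ] W) (B : V →L[ℝ] W) (C : X →L[ℝ] W)
    (h : A ∘L A.adjoint + B ∘L B.adjoint = C ∘L C.adjoint) {g : W → E}
    (hg : Integrable g ((smoothingGaussian X).map C)) :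
    ∫ u, ∫ v, g (A u + B v) ∂smoothingGaussian V ∂smoothingGaussian U =
      ∫ x, g (C x) ∂smoothingGaussian X := by
  have hmap := map_add_prod_smoothingGaussian A B C h
  have hL : AEMeasurable (fun p : U × V ↦ A p.1 + B p.2)
      ((smoothingGaussian U).prod (smoothingGaussian V)) := by
    fun_prop
  rw [← hmap] at hg
  calc ∫ u, ∫ v, g (A u + B v) ∂smoothingGaussian V ∂smoothingGaussian U
      = ∫ p, g (A p.1 + B p.2) ∂(smoothingGaussian U).prod (smoothingGaussian V) :=
        (integral_prod _ (hg.comp_aemeasurable hL)).symm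
    _ = ∫ w, g w ∂(smoothingGaussian X).map C := by
        rw [← hmap, integral_map hL hg.aestronglyMeasurable]
    _ = ∫ x, g (C x) ∂smoothingGaussian X :=
        integral_map (by fun_prop) (hmap ▸ hg.aestronglyMeasurable)

end SmoothingGaussian

lemma ProbabilityTheory.IsGaussian.integrable_of_abs_le_mul_one_add_norm_pow {E : Type*}
    [NormedAddCommGroup E] [NormedSpace ℝ E] [CompleteSpace E] [MeasurableSpace E] [BorelSpace E]
    [SecondCountableTopology E] {μ : Measure E} [IsGaussian μ] {g : E → ℝ}
    (hg : AEStronglyMeasurable g μ) {C : ℝ} {n : ℕ} (hle : ∀ y, |g y| ≤ C * (1 + ‖y‖) ^ n) : Integrable g μ := by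
  have hnorm : MemLp (fun y : E ↦ ‖y‖) n μ := (memLp_id μ n (by simp)).norm
  have hmom : Integrable (fun y ↦ ‖1 + ‖y‖‖ ^ n) μ :=
    ((memLp_const (1 : ℝ)).add hnorm).integrable_norm_pow'
  refine (hmom.const_mul C).mono' hg (.of_forall fun y ↦ ?_)
  simpa [abs_of_nonneg (by positivity : (0 : ℝ) ≤ 1 + ‖y‖)] using hle y

section Matrix

variable {n : Type*} [Fintype n]

lemma Matrix.IsSymm.posSemidef_mul_self {S : Matrix n n ℝ} (hS : S.IsSymm) :
    (S * S).PosSemidef := by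
  simpa [conjTranspose_eq_transpose_of_trivial, hS.eq] using posSemidef_conjTranspose_mul_self S

lemma Matrix.IsSymm.posDef_mul_self [DecidableEq n] {S : Matrix n n ℝ} (hS : S.IsSymm)
    (h : IsUnit S.det) : (S * S).PosDef := by
  simpa [conjTranspose_eq_transpose_of_trivial, hS.eq] using
    PosDef.conjTranspose_mul_self S (mulVec_injective_iff_isUnit.2 ((isUnit_iff_isUnit_det S).2 h))

lemma toEuclideanCLM_comp_adjoint [DecidableEq n] (M : Matrix n n ℝ) :
    toEuclideanCLM (𝕜 := ℝ) M ∘L (toEuclideanCLM (𝕜 := ℝ) M).adjoint =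
      toEuclideanCLM (𝕜 := ℝ) (M * Mᵀ) := by
  rw [map_mul, ← conjTranspose_eq_transpose_of_trivial, ← star_eq_conjTranspose, map_star,
    star_eq_adjoint]
  rfl

end Matrix

lemma gsmooth_eq_integral_smoothingGaussian {d : ℕ} (f : Vec d → ℝ)
    (S : Matrix (Fin d) (Fin d) ℝ) (x : Vec d) :
    gsmooth f S x = ∫ u, f (x + toEuclideanCLM (𝕜 := ℝ) S u) ∂smoothingGaussian (Vec d) := by
  rw [gsmooth, integral_smoothingGaussian, finrank_euclideanSpace_fin, smul_eq_mul]
  simp_rw [smul_eq_mul, mul_comm (rexp _)]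
  rfl

theorem stmt_10_general {d : ℕ} (f : Vec d → ℝ) (hfm : Measurable f)
    (hpoly : ∃ (C : ℝ) (n : ℕ), ∀ x : Vec d, |f x| ≤ C * (1 + ‖x‖) ^ n)
    (S T : Matrix (Fin d) (Fin d) ℝ)
    (hSsymm : S.IsSymm) (hSinv : IsUnit S.det)
    (hTsymm : T.IsSymm) :
    ((S * S + T * T).IsSymm ∧ (S * S + T * T).PosDef) ∧
    ∀ H : Matrix (Fin d) (Fin d) ℝ, H.IsSymm → H.PosDef → H * H = S * S + T * T →
      ∀ x : Vec d, gsmooth (gsmooth f S) T x = gsmooth f H x := by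
  have hpos : (S * S + T * T).PosDef :=
    (hSsymm.posDef_mul_self hSinv).add_posSemidef hTsymm.posSemidef_mul_self
  refine ⟨⟨isHermitian_iff_isSymm.1 hpos.isHermitian, hpos⟩, fun H hHsymm _ hH x ↦ ?_⟩
  obtain ⟨C, n, hfC⟩ := hpoly
  have hadj : toEuclideanCLM (𝕜 := ℝ) T ∘L (toEuclideanCLM (𝕜 := ℝ) T).adjoint +
      toEuclideanCLM (𝕜 := ℝ) S ∘L (toEuclideanCLM (𝕜 := ℝ) S).adjoint =
      toEuclideanCLM (𝕜 := ℝ) H ∘L (toEuclideanCLM (𝕜 := ℝ) H).adjoint := by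
    simp only [toEuclideanCLM_comp_adjoint, ← map_add, hSsymm.eq, hTsymm.eq, hHsymm.eq, hH,
      add_comm]
  have hint : Integrable (fun w ↦ f (x + w))
      ((smoothingGaussian (Vec d)).map (toEuclideanCLM (𝕜 := ℝ) H)) :=
    (integrable_map_measure hfm.aestronglyMeasurable (measurable_const_add x).aemeasurable).1
      (IsGaussian.integrable_of_abs_le_mul_one_add_norm_pow hfm.aestronglyMeasurable hfC)
  simp only [gsmooth_eq_integral_smoothingGaussian, add_assoc]
  exact integral_integral_smoothingGaussian_comp_add _ _ _ hadj hint

/-- `Σ² + T²` is symmetric positive definite, and smoothing by `Σ` and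
then by `T` equals smoothing by `H = √(Σ² + T²)`. -/
theorem stmt_10 {d : ℕ} (f : Vec d → ℝ) (hfm : Measurable f)
    (hpoly : ∃ (C : ℝ) (n : ℕ), ∀ x : Vec d, |f x| ≤ C * (1 + ‖x‖) ^ n)
    (S T : Matrix (Fin d) (Fin d) ℝ)
    (hSsymm : S.IsSymm) (hSinv : IsUnit S.det)
    (hTsymm : T.IsSymm) (hTinv : IsUnit T.det) :
    ((S * S + T * T).IsSymm ∧ (S * S + T * T).PosDef) ∧
    ∀ H : Matrix (Fin d) (Fin d) ℝ, H.IsSymm → H.PosDef → H * H = S * S + T * T →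
      ∀ x : Vec d, gsmooth (gsmooth f S) T x = gsmooth f H x :=
  stmt_10_general f hfm hpoly S T hSsymm hSinv hTsymm

end
end
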